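/- In the setting of Proposition 3: let μ⁺, μ⁻ be finite measures on ℝᵖ with equal total mass, disjoint supports, f* measurable with f*♯μ⁺, f*♯μ⁻ non-atomic with finite second moments. Define f = f_{Q*} via the rule (⁎) with Q* = (F₊⁻¹ + F₋⁻¹)/2, where F₊, F₋ are the CDFs of the normalized pushforwards f*♯Pμ⁺, f*♯Pμ⁻. Then ∫(f*(x) - f(x))² dμ⁺(x) = ∫(f*(x) - f(x))² dμ⁻(x). -/

import Mathlib

open MeasureTheory Classical

/-- Pushforward under `g` of the normalization of `μ` to a probability measure. -/
noncomputable def normPush {α : Type*} [MeasurableSpace α]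
    (μ : Measure α) (g : α → ℝ) : Measure ℝ :=
  ((μ Set.univ)⁻¹ • μ).map g

/-- Cumulative distribution function of a measure on `ℝ` (as a real number). -/
noncomputable def cdfR (ν : Measure ℝ) (t : ℝ) : ℝ := (ν (Set.Iic t)).toReal

/-- Quantile (generalized inverse CDF) function of a measure on `ℝ`. -/
noncomputable def quantileFn (ν : Measure ℝ) (u : ℝ) : ℝ := sInf {t : ℝ | u ≤ cdfR ν t}

section CDF

variable (ν : Measure ℝ) [IsProbabilityMeasure ν]

lemma cdfR_eq_cdf : cdfR ν = ⇑(ProbabilityTheory.cdf ν) := by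
  funext t; rw [cdfR, ProbabilityTheory.cdf_eq_real, measureReal_def]

lemma cdfR_mono : Monotone (cdfR ν) := by
  rw [cdfR_eq_cdf]; exact ProbabilityTheory.monotone_cdf ν

lemma cdfR_nonneg (t : ℝ) : 0 ≤ cdfR ν t := ENNReal.toReal_nonneg

lemma cdfR_le_one (t : ℝ) : cdfR ν t ≤ 1 := by
  rw [cdfR_eq_cdf]; exact ProbabilityTheory.cdf_le_one ν t

lemma cdfR_tendsto_atBot : Filter.Tendsto (cdfR ν) Filter.atBot (nhds 0) := by
  rw [cdfR_eq_cdf]; exact ProbabilityTheory.tendsto_cdf_atBot ν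

lemma cdfR_tendsto_atTop : Filter.Tendsto (cdfR ν) Filter.atTop (nhds 1) := by
  rw [cdfR_eq_cdf]; exact ProbabilityTheory.tendsto_cdf_atTop ν

lemma ofReal_cdfR (t : ℝ) : ENNReal.ofReal (cdfR ν t) = ν (Set.Iic t) := by
  rw [cdfR, ENNReal.ofReal_toReal (measure_ne_top ν _)]

variable {ν}

lemma cdfR_continuous (hna : ∀ t : ℝ, ν {t} = 0) : Continuous (cdfR ν) := by
  rw [cdfR_eq_cdf, continuous_iff_continuousAt]
  intro x
  rw [(ProbabilityTheory.monotone_cdf ν).continuousAt_iff_leftLim_eq_rightLim]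
  have hr : Function.rightLim (⇑(ProbabilityTheory.cdf ν)) x = ProbabilityTheory.cdf ν x :=
    rightLim_eq_of_tendsto
      (((ProbabilityTheory.cdf ν).right_continuous x).tendsto.mono_left
        (nhdsWithin_mono x Set.Ioi_subset_Ici_self))
  have hl : Function.leftLim (⇑(ProbabilityTheory.cdf ν)) x = ProbabilityTheory.cdf ν x := by
    have h1 := StieltjesFunction.measure_singleton (ProbabilityTheory.cdf ν) x
    rw [ProbabilityTheory.measure_cdf, hna x] at h1
    have h2 : Function.leftLim (⇑(ProbabilityTheory.cdf ν)) x ≤ ProbabilityTheory.cdf ν x :=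
      Monotone.leftLim_le (ProbabilityTheory.monotone_cdf ν) le_rfl
    have h3 : ProbabilityTheory.cdf ν x - Function.leftLim (⇑(ProbabilityTheory.cdf ν)) x ≤ 0 := by
      by_contra h
      push_neg at h
      rw [eq_comm, ENNReal.ofReal_eq_zero] at h1
      linarith
    linarith
  rw [hl, hr]

lemma measure_cdfR_le (hna : ∀ t : ℝ, ν {t} = 0) (u : ℝ) :
    ν {t | cdfR ν t ≤ u} = ENNReal.ofReal (min u 1) := by
  rcases lt_or_ge u 0 with hu | hu
  · have : {t | cdfR ν t ≤ u} = ∅ := by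
      ext t; simp only [Set.mem_setOf_eq, Set.mem_empty_iff_false, iff_false, not_le]
      exact lt_of_lt_of_le hu (cdfR_nonneg ν t)
    rw [this, measure_empty, eq_comm, ENNReal.ofReal_eq_zero]
    exact le_of_lt (lt_of_le_of_lt (min_le_left _ _) hu)
  rcases le_or_gt 1 u with hu1 | hu1
  · have : {t | cdfR ν t ≤ u} = Set.univ := by
      ext t; simp only [Set.mem_setOf_eq, Set.mem_univ, iff_true]
      exact (cdfR_le_one ν t).trans hu1
    rw [this, measure_univ, min_eq_right hu1, ENNReal.ofReal_one]
  · -- 0 ≤ u < 1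
    rw [min_eq_left hu1.le]
    set T := {t | cdfR ν t ≤ u} with hT
    rcases Set.eq_empty_or_nonempty T with hTe | hTne
    · rw [hTe, measure_empty]
      -- then u must be 0
      have : u ≤ 0 := by
        by_contra h
        push_neg at h
        obtain ⟨t, ht⟩ : ∃ t, cdfR ν t < u :=
          ((cdfR_tendsto_atBot ν).eventually_lt_const h).exists
        exact Set.eq_empty_iff_forall_notMem.mp hTe t ht.le
      rw [eq_comm, ENNReal.ofReal_eq_zero]
      linarith
    · have hTa : BddAbove T := by
        obtain ⟨t, ht⟩ : ∃ t, u < cdfR ν t :=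
          ((cdfR_tendsto_atTop ν).eventually_const_lt hu1).exists
        refine ⟨t, fun x hx => ?_⟩
        by_contra h
        push_neg at h
        exact absurd (le_trans (cdfR_mono ν h.le) hx) (not_le.mpr ht)
      have hTc : IsClosed T := IsClosed.preimage (cdfR_continuous hna) isClosed_Iic
      set s := sSup T with hs
      have hsT : s ∈ T := hTc.csSup_mem hTne hTa
      have hTeq : T = Set.Iic s := by
        apply Set.Subset.antisymm
        · exact fun x hx => le_csSup hTa hx
        · exact fun x hx => le_trans (cdfR_mono ν hx) hsT
      have hFs : cdfR ν s = u := by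
        refine le_antisymm hsT ?_
        have hseq : Filter.Tendsto (fun n : ℕ => s + 1 / (n + 1)) Filter.atTop (nhds s) := by
          simpa using tendsto_const_nhds.add (tendsto_one_div_add_atTop_nhds_zero_nat (𝕜 := ℝ))
        have hlim : Filter.Tendsto (fun n : ℕ => cdfR ν (s + 1 / (n + 1))) Filter.atTop
            (nhds (cdfR ν s)) := ((cdfR_continuous hna).tendsto s).comp hseq
        refine ge_of_tendsto hlim (Filter.Eventually.of_forall fun n => ?_)
        by_contra h
        push_neg at h
        have : s + 1 / (n + 1 : ℝ) ∈ T := h.le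
        have := le_csSup hTa this
        have hpos : (0:ℝ) < 1 / (n + 1) := by positivity
        linarith
      rw [hTeq, ← ofReal_cdfR ν s, hFs]

lemma measure_one_le_cdfR (hna : ∀ t : ℝ, ν {t} = 0) : ν {t | 1 ≤ cdfR ν t} = 0 := by
  set T := {t | 1 ≤ cdfR ν t} with hT
  rcases Set.eq_empty_or_nonempty T with hTe | hTne
  · rw [hTe, measure_empty]
  · have hTb : BddBelow T := by
      obtain ⟨t, ht⟩ : ∃ t, cdfR ν t < 1 :=
        ((cdfR_tendsto_atBot ν).eventually_lt_const one_pos).exists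
      refine ⟨t, fun x hx => ?_⟩
      by_contra h
      push_neg at h
      exact absurd (le_trans hx (cdfR_mono ν h.le)) (not_le.mpr ht)
    have hTc : IsClosed T := IsClosed.preimage (cdfR_continuous hna) isClosed_Ici
    set s := sInf T with hs
    have hsT : s ∈ T := hTc.csInf_mem hTne hTb
    have hFs : cdfR ν s = 1 := le_antisymm (cdfR_le_one ν s) hsT
    have hIic : ν (Set.Iic s) = 1 := by rw [← ofReal_cdfR ν s, hFs, ENNReal.ofReal_one]
    have hIio : ν (Set.Iio s) = 1 := by
      have h1 : Set.Iio s = Set.Iic s \ {s} := by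
        ext x; simp [lt_iff_le_and_ne]
      rw [h1, measure_diff_null (hna s), hIic]
    have hsub : T ⊆ Set.Ici s := fun x hx => csInf_le hTb hx
    refine le_antisymm ?_ zero_le
    calc ν T ≤ ν (Set.Ici s) := measure_mono hsub
      _ = 0 := by
          have h2 : Set.Ici s = (Set.Iio s)ᶜ := by ext x; simp
          rw [h2, measure_compl measurableSet_Iio (measure_ne_top ν _), hIio, measure_univ,
            tsub_self]

lemma ae_quantile_cdfR (hna : ∀ t : ℝ, ν {t} = 0) :
    ∀ᵐ t ∂ν, quantileFn ν (cdfR ν t) = t := by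
  have hB : ν (⋃ q : ℚ, {t : ℝ | (q : ℝ) < t ∧ cdfR ν t ≤ cdfR ν q}) = 0 := by
    refine le_antisymm (le_trans (measure_iUnion_le _) ?_) zero_le
    have h0 : ∀ q : ℚ, ν {t : ℝ | (q : ℝ) < t ∧ cdfR ν t ≤ cdfR ν q} = 0 := by
      intro q
      have hset : {t : ℝ | (q : ℝ) < t ∧ cdfR ν t ≤ cdfR ν q} =
          {t : ℝ | cdfR ν t ≤ cdfR ν q} \ Set.Iic (q : ℝ) := by
        ext t; simp only [Set.mem_setOf_eq, Set.mem_diff, Set.mem_Iic, not_le]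
        tauto
      have hsub : Set.Iic (q : ℝ) ⊆ {t : ℝ | cdfR ν t ≤ cdfR ν q} :=
        fun x hx => cdfR_mono ν hx
      rw [hset, measure_diff hsub (by exact measurableSet_Iic.nullMeasurableSet)
        (measure_ne_top ν _), measure_cdfR_le hna, ← ofReal_cdfR ν q,
        min_eq_left (cdfR_le_one ν q), tsub_self]
    simp [h0]
  filter_upwards [measure_eq_zero_iff_ae_notMem.mp hB] with t ht
  have hlb : ∀ s ∈ {s : ℝ | cdfR ν t ≤ cdfR ν s}, t ≤ s := by
    intro s hs
    by_contra h
    push_neg at h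
    obtain ⟨q, hq1, hq2⟩ := exists_rat_btwn h
    exact ht (Set.mem_iUnion.mpr ⟨q, hq2, le_trans hs (cdfR_mono ν hq1.le)⟩)
  have htm : t ∈ {s : ℝ | cdfR ν t ≤ cdfR ν s} := by simp only [Set.mem_setOf_eq]; exact le_rfl
  exact le_antisymm (csInf_le ⟨t, hlb⟩ htm) (le_csInf ⟨t, htm⟩ hlb)

lemma quantileFn_monotoneOn : MonotoneOn (quantileFn ν) (Set.Ioo 0 1) := by
  intro u hu v hv huv
  have hSv : {t : ℝ | v ≤ cdfR ν t}.Nonempty := by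
    obtain ⟨t, ht⟩ : ∃ t, v < cdfR ν t :=
      ((cdfR_tendsto_atTop ν).eventually_const_lt hv.2).exists
    exact ⟨t, ht.le⟩
  have hSu : BddBelow {t : ℝ | u ≤ cdfR ν t} := by
    obtain ⟨t, ht⟩ : ∃ t, cdfR ν t < u :=
      ((cdfR_tendsto_atBot ν).eventually_lt_const hu.1).exists
    refine ⟨t, fun x hx => ?_⟩
    by_contra h
    push_neg at h
    exact absurd (le_trans hx (cdfR_mono ν h.le)) (not_le.mpr ht)
  exact csInf_le_csInf hSu hSv fun t ht => le_trans huv ht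

lemma map_cdfR_Iic (hna : ∀ t : ℝ, ν {t} = 0) (u : ℝ) :
    ν.map (cdfR ν) (Set.Iic u) = ENNReal.ofReal (min u 1) := by
  rw [Measure.map_apply (cdfR_continuous hna).measurable measurableSet_Iic]
  exact measure_cdfR_le hna u

lemma map_cdfR_compl_Ioo (hna : ∀ t : ℝ, ν {t} = 0) :
    ν.map (cdfR ν) (Set.Ioo 0 1)ᶜ = 0 := by
  have h1 : (Set.Ioo (0:ℝ) 1)ᶜ ⊆ Set.Iic 0 ∪ Set.Ici 1 := by
    intro x hx
    simp only [Set.mem_compl_iff, Set.mem_Ioo, not_and, not_lt] at hx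
    rcases le_or_gt x 0 with h | h
    · exact Or.inl h
    · exact Or.inr (hx h)
  refine le_antisymm (le_trans (measure_mono h1) (le_trans (measure_union_le _ _) ?_)) zero_le
  have h2 : ν.map (cdfR ν) (Set.Iic 0) = 0 := by
    rw [map_cdfR_Iic hna 0]
    simp
  have h3 : ν.map (cdfR ν) (Set.Ici 1) = 0 := by
    rw [Measure.map_apply (cdfR_continuous hna).measurable measurableSet_Ici]
    exact measure_one_le_cdfR hna
  rw [h2, h3, add_zero]

end CDF

lemma map_cdfR_eq (ν ρ : Measure ℝ) [IsProbabilityMeasure ν] [IsProbabilityMeasure ρ]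
    (hnaν : ∀ t : ℝ, ν {t} = 0) (hnaρ : ∀ t : ℝ, ρ {t} = 0) :
    ν.map (cdfR ν) = ρ.map (cdfR ρ) := by
  have hν : IsProbabilityMeasure (ν.map (cdfR ν)) :=
    Measure.isProbabilityMeasure_map (cdfR_continuous hnaν).measurable.aemeasurable
  have hρ : IsProbabilityMeasure (ρ.map (cdfR ρ)) :=
    Measure.isProbabilityMeasure_map (cdfR_continuous hnaρ).measurable.aemeasurable
  refine Measure.eq_of_cdf _ _ ?_
  ext u
  rw [ProbabilityTheory.cdf_eq_real, ProbabilityTheory.cdf_eq_real, measureReal_def, measureReal_def,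
    map_cdfR_Iic hnaν, map_cdfR_Iic hnaρ]

section NormPush

variable {α : Type*} [MeasurableSpace α] (μ : Measure α) [IsFiniteMeasure μ]
  {g : α → ℝ} (hg : Measurable g)

lemma normPush_eq_smul_map : normPush μ g = (μ Set.univ)⁻¹ • μ.map g := by
  rw [normPush, Measure.map_smul]

include hg in
lemma isProbabilityMeasure_normPush (h0 : μ Set.univ ≠ 0) :
    IsProbabilityMeasure (normPush μ g) := by
  constructor
  rw [normPush, Measure.map_apply hg MeasurableSet.univ, Set.preimage_univ,
    Measure.smul_apply, smul_eq_mul, ENNReal.inv_mul_cancel h0 (measure_ne_top μ _)]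

lemma normPush_singleton (t : ℝ) (h : μ.map g {t} = 0) : normPush μ g {t} = 0 := by
  rw [normPush_eq_smul_map, Measure.smul_apply, smul_eq_mul, h, mul_zero]

lemma map_eq_smul_normPush (h0 : μ Set.univ ≠ 0) :
    μ.map g = (μ Set.univ) • normPush μ g := by
  rw [normPush_eq_smul_map, smul_smul, ENNReal.mul_inv_cancel h0 (measure_ne_top μ _), one_smul]

end NormPush

section Side

variable (ν ρ : Measure ℝ) [IsProbabilityMeasure ν] [IsProbabilityMeasure ρ]

lemma aemeas_h (hnaν : ∀ t : ℝ, ν {t} = 0) :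
    AEMeasurable (fun u => ((quantileFn ν u - quantileFn ρ u) / 2) ^ 2) (ν.map (cdfR ν)) := by
  have hae : ∀ᵐ u ∂ν.map (cdfR ν), u ∈ Set.Ioo (0:ℝ) 1 := by
    rw [MeasureTheory.ae_iff]
    simpa [Set.compl_def] using map_cdfR_compl_Ioo hnaν
  have h1 : AEMeasurable (quantileFn ν) (ν.map (cdfR ν)) := by
    rw [← Measure.restrict_eq_self_of_ae_mem hae]
    exact aemeasurable_restrict_of_monotoneOn measurableSet_Ioo quantileFn_monotoneOn
  have h2 : AEMeasurable (quantileFn ρ) (ν.map (cdfR ν)) := by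
    rw [← Measure.restrict_eq_self_of_ae_mem hae]
    exact aemeasurable_restrict_of_monotoneOn measurableSet_Ioo quantileFn_monotoneOn
  exact ((h1.sub h2).div_const 2).pow_const 2

lemma ae_eq_G (hnaν : ∀ t : ℝ, ν {t} = 0) :
    (fun t => (t - (quantileFn ν (cdfR ν t) + quantileFn ρ (cdfR ν t)) / 2) ^ 2)
      =ᵐ[ν] (fun u => ((quantileFn ν u - quantileFn ρ u) / 2) ^ 2) ∘ (cdfR ν) := by
  filter_upwards [ae_quantile_cdfR hnaν] with t ht
  simp only [Function.comp_apply]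
  rw [ht]
  ring

lemma aemeas_G (hnaν : ∀ t : ℝ, ν {t} = 0) :
    AEMeasurable
      (fun t => (t - (quantileFn ν (cdfR ν t) + quantileFn ρ (cdfR ν t)) / 2) ^ 2) ν := by
  have hc : AEMeasurable ((fun u => ((quantileFn ν u - quantileFn ρ u) / 2) ^ 2) ∘ (cdfR ν)) ν :=
    (aemeas_h ν ρ hnaν).comp_aemeasurable (cdfR_continuous hnaν).measurable.aemeasurable
  exact hc.congr (ae_eq_G ν ρ hnaν).symm

lemma integral_side (hnaν : ∀ t : ℝ, ν {t} = 0) :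
    ∫ t, (t - (quantileFn ν (cdfR ν t) + quantileFn ρ (cdfR ν t)) / 2) ^ 2 ∂ν =
      ∫ u, ((quantileFn ν u - quantileFn ρ u) / 2) ^ 2 ∂(ν.map (cdfR ν)) := by
  rw [integral_map (cdfR_continuous hnaν).measurable.aemeasurable
    (aemeas_h ν ρ hnaν).aestronglyMeasurable]
  exact integral_congr_ae (ae_eq_G ν ρ hnaν)

end Side

theorem stmt_14 {p : ℕ} (μp μm : Measure (Fin p → ℝ))
    [IsFiniteMeasure μp] [IsFiniteMeasure μm]
    (hmass : μp Set.univ = μm Set.univ) (hpos : 0 < μp Set.univ)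
    (Ap Am : Set (Fin p → ℝ)) (hApm : MeasurableSet Ap) (hAmm : MeasurableSet Am)
    (hdisj : Disjoint Ap Am) (hAp : μp Apᶜ = 0) (hAm : μm Amᶜ = 0)
    (fstar : (Fin p → ℝ) → ℝ) (hfs : Measurable fstar)
    (hnap : ∀ t : ℝ, μp.map fstar {t} = 0) (hnam : ∀ t : ℝ, μm.map fstar {t} = 0)
    (hmomp : Integrable (fun t : ℝ => t ^ 2) (normPush μp fstar))
    (hmomm : Integrable (fun t : ℝ => t ^ 2) (normPush μm fstar)) :
    ∫ x, (fstar x -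
        (if x ∈ Ap then
            (quantileFn (normPush μp fstar) (cdfR (normPush μp fstar) (fstar x)) +
              quantileFn (normPush μm fstar) (cdfR (normPush μp fstar) (fstar x))) / 2
          else if x ∈ Am then
            (quantileFn (normPush μp fstar) (cdfR (normPush μm fstar) (fstar x)) +
              quantileFn (normPush μm fstar) (cdfR (normPush μm fstar) (fstar x))) / 2
          else fstar x)) ^ 2 ∂μp =
      ∫ x, (fstar x -
        (if x ∈ Ap then
            (quantileFn (normPush μp fstar) (cdfR (normPush μp fstar) (fstar x)) +
              quantileFn (normPush μm fstar) (cdfR (normPush μp fstar) (fstar x))) / 2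
          else if x ∈ Am then
            (quantileFn (normPush μp fstar) (cdfR (normPush μm fstar) (fstar x)) +
              quantileFn (normPush μm fstar) (cdfR (normPush μm fstar) (fstar x))) / 2
          else fstar x)) ^ 2 ∂μm := by
  set νp := normPush μp fstar with hνp
  set νm := normPush μm fstar with hνm
  have hp0 : μp Set.univ ≠ 0 := hpos.ne'
  have hm0 : μm Set.univ ≠ 0 := by rw [← hmass]; exact hp0
  haveI hPp : IsProbabilityMeasure νp := isProbabilityMeasure_normPush μp hfs hp0
  haveI hPm : IsProbabilityMeasure νm := isProbabilityMeasure_normPush μm hfs hm0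
  have hnaνp : ∀ t : ℝ, νp {t} = 0 := fun t => normPush_singleton μp t (hnap t)
  have hnaνm : ∀ t : ℝ, νm {t} = 0 := fun t => normPush_singleton μm t (hnam t)
  -- a.e. membership
  have haep : ∀ᵐ x ∂μp, x ∈ Ap := by
    rw [MeasureTheory.ae_iff]
    simpa [Set.compl_def] using hAp
  have haem : ∀ᵐ x ∂μm, x ∈ Am := by
    rw [MeasureTheory.ae_iff]
    simpa [Set.compl_def] using hAm
  -- reduce LHS integrand
  have hL1 : ∫ x, (fstar x -
        (if x ∈ Ap then
            (quantileFn νp (cdfR νp (fstar x)) + quantileFn νm (cdfR νp (fstar x))) / 2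
          else if x ∈ Am then
            (quantileFn νp (cdfR νm (fstar x)) + quantileFn νm (cdfR νm (fstar x))) / 2
          else fstar x)) ^ 2 ∂μp =
      ∫ x, (fstar x -
        (quantileFn νp (cdfR νp (fstar x)) + quantileFn νm (cdfR νp (fstar x))) / 2) ^ 2 ∂μp := by
    refine integral_congr_ae ?_
    filter_upwards [haep] with x hx
    rw [if_pos hx]
  have hR1 : ∫ x, (fstar x -
        (if x ∈ Ap then
            (quantileFn νp (cdfR νp (fstar x)) + quantileFn νm (cdfR νp (fstar x))) / 2
          else if x ∈ Am then
            (quantileFn νp (cdfR νm (fstar x)) + quantileFn νm (cdfR νm (fstar x))) / 2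
          else fstar x)) ^ 2 ∂μm =
      ∫ x, (fstar x -
        (quantileFn νm (cdfR νm (fstar x)) + quantileFn νp (cdfR νm (fstar x))) / 2) ^ 2 ∂μm := by
    refine integral_congr_ae ?_
    filter_upwards [haem] with x hx
    rw [if_neg (Set.disjoint_right.mp hdisj hx), if_pos hx]
    ring
  rw [hL1, hR1]
  -- change of variables to the pushforward measures
  have hmapp : μp.map fstar = (μp Set.univ) • νp := map_eq_smul_normPush μp hp0
  have hmapm : μm.map fstar = (μm Set.univ) • νm := map_eq_smul_normPush μm hm0
  have hGp : AEStronglyMeasurable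
      (fun t => (t - (quantileFn νp (cdfR νp t) + quantileFn νm (cdfR νp t)) / 2) ^ 2)
      (μp.map fstar) := by
    rw [hmapp]
    exact ((aemeas_G νp νm hnaνp).smul_measure _).aestronglyMeasurable
  have hGm : AEStronglyMeasurable
      (fun t => (t - (quantileFn νm (cdfR νm t) + quantileFn νp (cdfR νm t)) / 2) ^ 2)
      (μm.map fstar) := by
    rw [hmapm]
    exact ((aemeas_G νm νp hnaνm).smul_measure _).aestronglyMeasurable
  have hL2 := (integral_map hfs.aemeasurable hGp).symm
  have hR2 := (integral_map hfs.aemeasurable hGm).symm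
  rw [hL2, hR2, hmapp, hmapm, integral_smul_measure, integral_smul_measure,
    integral_side νp νm hnaνp, integral_side νm νp hnaνm, hmass,
    map_cdfR_eq νm νp hnaνm hnaνp]
  congr 1
  refine integral_congr_ae (Filter.Eventually.of_forall fun u => ?_)
  ring
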